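/- Let 1 ≤ p < ∞ and let G1 ⊂ G ⊊ R^n be domains such that G1 is midpoint convex (for all x, y ∈ G1 the midpoint (x+y)/2 lies in G1). Then b_{G1,p}(x,y) ≥ b_{G,p}(x,y) for all x, y ∈ G1. -/

import Mathlib

/-!
Fix `z ∈ ∂G`. Since `G1` is open and contained in `G`, `z ∉ G1`, so the segment from the
midpoint `m` of `x, y` (which lies in `G1`) to `z` meets `∂G1` at some `w`. The function
`w ↦ |x - w|^p + |y - w|^p` is convex for `p ≥ 1`, hence bounded on `[m, z]` by its value at
an endpoint; at `m` it equals `2 (|x - y|/2)^p ≤ 2 ((|x - z| + |y - z|)/2)^p ≤ |x - z|^p + |y - z|^p`.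
So the Barrlund quotient at `z` is at most the one at `w ∈ ∂G1`.
-/

open Set

/-- Barrlund distance with parameter `p` in a domain `D`. -/
noncomputable def barrlund {n : ℕ} (D : Set (EuclideanSpace ℝ (Fin n))) (p : ℝ)
    (x y : EuclideanSpace ℝ (Fin n)) : ℝ :=
  sSup ((fun z => dist x y / (dist x z ^ p + dist y z ^ p) ^ (1 / p)) '' frontier D)

theorem IsPreconnected.exists_mem_frontier_of_isOpen {X : Type*} [TopologicalSpace X]
    {s A : Set X} (hs : IsPreconnected s) (hA : IsOpen A) (hsA : (s ∩ A).Nonempty)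
    (hsA' : ¬s ⊆ A) : ∃ w ∈ s, w ∈ frontier A := by
  by_contra! h
  refine hsA' (hs.subset_of_closure_inter_subset hA hsA fun w ⟨hwA, hws⟩ => ?_)
  by_contra hw
  exact h w hws (hA.frontier_eq ▸ ⟨hwA, hw⟩)

theorem le_rpow_add_rpow_rpow_one_div {a b p : ℝ} (ha : 0 ≤ a) (hb : 0 ≤ b) (hp : 0 < p) :
    a ≤ (a ^ p + b ^ p) ^ (1 / p) :=
  calc a = (a ^ p) ^ (1 / p) := by rw [one_div, Real.rpow_rpow_inv ha hp.ne']
    _ ≤ (a ^ p + b ^ p) ^ (1 / p) := by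
      gcongr
      exact le_add_of_nonneg_right (by positivity)

section NormedSpace

variable {E : Type*} [NormedAddCommGroup E] [NormedSpace ℝ E] {p : ℝ}

theorem convexOn_dist_rpow (hp : 1 ≤ p) (x : E) : ConvexOn ℝ univ fun w => dist x w ^ p := by
  refine ⟨convex_univ, fun u _ v _ a b ha hb hab => ?_⟩
  have hdist := (convexOn_dist x convex_univ).2 (mem_univ u) (mem_univ v) ha hb hab
  simp only [smul_eq_mul, dist_comm x] at hdist ⊢
  calc dist (a • u + b • v) x ^ p ≤ (a * dist u x + b * dist v x) ^ p :=
        Real.rpow_le_rpow dist_nonneg hdist (by linarith)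
    _ ≤ a * dist u x ^ p + b * dist v x ^ p :=
        (convexOn_rpow hp).2 dist_nonneg dist_nonneg ha hb hab

theorem dist_rpow_add_dist_rpow_midpoint_le (hp : 1 ≤ p) (x y z : E) :
    dist x (midpoint ℝ x y) ^ p + dist y (midpoint ℝ x y) ^ p ≤ dist x z ^ p + dist y z ^ p := by
  have hmean := (convexOn_rpow hp).2 (dist_nonneg (x := x) (y := z))
    (dist_nonneg (x := y) (y := z)) (by norm_num : (0 : ℝ) ≤ 1 / 2)
    (by norm_num : (0 : ℝ) ≤ 1 / 2) (by norm_num)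
  simp only [smul_eq_mul] at hmean
  have hhalf : dist x y / 2 ≤ 1 / 2 * dist x z + 1 / 2 * dist y z := by
    linarith [dist_triangle_right x y z]
  rw [dist_left_midpoint, dist_right_midpoint, Real.norm_two, inv_mul_eq_div]
  linarith [Real.rpow_le_rpow (by positivity) hhalf (by linarith : (0 : ℝ) ≤ p)]

theorem dist_rpow_add_dist_rpow_le_of_mem_segment_midpoint (hp : 1 ≤ p) {x y z w : E}
    (hw : w ∈ segment ℝ (midpoint ℝ x y) z) :
    dist x w ^ p + dist y w ^ p ≤ dist x z ^ p + dist y z ^ p :=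
  (((convexOn_dist_rpow hp x).add (convexOn_dist_rpow hp y)).le_on_segment (mem_univ _)
    (mem_univ _) hw).trans (max_le (dist_rpow_add_dist_rpow_midpoint_le hp x y z) le_rfl)

end NormedSpace

theorem barrlund_nonneg {n : ℕ} (D : Set (EuclideanSpace ℝ (Fin n))) (p : ℝ)
    (x y : EuclideanSpace ℝ (Fin n)) : 0 ≤ barrlund D p x y :=
  Real.sSup_nonneg fun _ ⟨_, _, h⟩ => h ▸ by positivity

theorem le_barrlund_of_mem_frontier {n : ℕ} {D : Set (EuclideanSpace ℝ (Fin n))} {p : ℝ}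
    {x y w : EuclideanSpace ℝ (Fin n)} (hD : IsOpen D) (hx : x ∈ D) (hp : 0 < p)
    (hw : w ∈ frontier D) :
    dist x y / (dist x w ^ p + dist y w ^ p) ^ (1 / p) ≤ barrlund D p x y := by
  obtain ⟨ε, hε, hball⟩ := Metric.isOpen_iff.mp hD x hx
  have hfar : ∀ z ∈ frontier D, ε ≤ dist x z := fun z hz =>
    le_of_not_gt fun h => (hD.frontier_eq ▸ hz).2 (hball (Metric.mem_ball'.2 h))
  refine le_csSup ⟨dist x y / ε, ?_⟩ ⟨w, hw, rfl⟩
  rintro _ ⟨z, hz, rfl⟩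
  exact div_le_div_of_nonneg_left dist_nonneg hε
    ((hfar z hz).trans (le_rpow_add_rpow_rpow_one_div dist_nonneg dist_nonneg hp))

theorem stmt5_general {n : ℕ} (G1 G : Set (EuclideanSpace ℝ (Fin n)))
    (hG1 : IsOpen G1) (hsub : G1 ⊆ G)
    (hmid : ∀ x ∈ G1, ∀ y ∈ G1, (2⁻¹ : ℝ) • (x + y) ∈ G1)
    (p : ℝ) (hp : 1 ≤ p) (x y : EuclideanSpace ℝ (Fin n)) (hx : x ∈ G1) (hy : y ∈ G1) :
    barrlund G p x y ≤ barrlund G1 p x y := by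
  have hp0 : 0 < p := zero_lt_one.trans_le hp
  -- `Real.sSup_le` also covers `frontier G = ∅`, where the left side is the junk value `sSup ∅ = 0`.
  refine Real.sSup_le ?_ (barrlund_nonneg G1 p x y)
  rintro _ ⟨z, hz, rfl⟩
  have hm : midpoint ℝ x y ∈ G1 := by simpa [midpoint_eq_smul_add] using hmid x hx y hy
  have hzG1 : z ∉ G1 := fun h => hz.2 (interior_maximal hsub hG1 h)
  obtain ⟨w, hw_seg, hw⟩ := (convex_segment (midpoint ℝ x y) z).isPreconnected
    |>.exists_mem_frontier_of_isOpen hG1 ⟨_, left_mem_segment ℝ _ z, hm⟩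
      fun h => hzG1 (h (right_mem_segment ℝ _ z))
  have hxw : 0 < dist x w := dist_pos.2 fun h => (hG1.frontier_eq ▸ hw).2 (h ▸ hx)
  calc dist x y / (dist x z ^ p + dist y z ^ p) ^ (1 / p)
      ≤ dist x y / (dist x w ^ p + dist y w ^ p) ^ (1 / p) :=
        div_le_div_of_nonneg_left dist_nonneg
          (hxw.trans_le (le_rpow_add_rpow_rpow_one_div dist_nonneg dist_nonneg hp0))
          (Real.rpow_le_rpow (by positivity)
            (dist_rpow_add_dist_rpow_le_of_mem_segment_midpoint hp hw_seg) (by positivity))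
    _ ≤ barrlund G1 p x y := le_barrlund_of_mem_frontier hG1 hx hp0 hw

theorem stmt5 {n : ℕ} (G1 G : Set (EuclideanSpace ℝ (Fin n)))
    (hG1 : IsOpen G1) (hG1c : IsConnected G1)
    (hG : IsOpen G) (hGc : IsConnected G) (hGne : G ≠ univ) (hsub : G1 ⊆ G)
    (hmid : ∀ x ∈ G1, ∀ y ∈ G1, (2⁻¹ : ℝ) • (x + y) ∈ G1)
    (p : ℝ) (hp : 1 ≤ p) (x y : EuclideanSpace ℝ (Fin n)) (hx : x ∈ G1) (hy : y ∈ G1) :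
    barrlund G p x y ≤ barrlund G1 p x y :=
  stmt5_general G1 G hG1 hsub hmid p hp x y hx hy
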